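/- There exist constants C₁, C₂ > 0 such that for all sufficiently large N, C₁·N ≤ ∑_{(a,c): a,c ≥ 1, ac ≤ N} (1/c)·(1 − 2^{−a})^c ≤ C₂·N. -/

import Mathlib

open Finset

lemma sum_inv_sq_le (N : ℕ) : ∑ c ∈ Icc 1 N, (1:ℝ)/(c:ℝ)^2 ≤ 2 := by
  have h : ∀ n : ℕ, 1 ≤ n → ∑ c ∈ Icc 1 n, (1:ℝ)/(c:ℝ)^2 ≤ 2 - 1/n := by
    intro n hn
    induction n, hn using Nat.le_induction with
    | base => norm_num
    | succ n hn ih =>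
      rw [Finset.sum_Icc_succ_top (by omega : 1 ≤ n+1)]
      have hn0 : (0:ℝ) < n := by exact_mod_cast hn
      have key : (1:ℝ)/((n:ℝ)+1)^2 ≤ 1/n - 1/((n:ℝ)+1) := by
        rw [div_sub_div _ _ (ne_of_gt hn0) (by positivity),
          div_le_div_iff₀ (by positivity) (by positivity)]
        ring_nf
        nlinarith [hn0]
      push_cast
      linarith
  rcases Nat.eq_zero_or_pos N with h0 | h1
  · simp [h0]
  · have h2 := h N h1
    have h3 : (0:ℝ) < 1/N := by positivity
    linarith

def rowEmb : ℕ ↪ ℕ × ℕ := ⟨fun a => (a, 1), fun x y h => congrArg Prod.fst h⟩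

@[simp] lemma rowEmb_apply (a : ℕ) : rowEmb a = (a, 1) := rfl

theorem mertens_x_minus_two :
    ∃ C₁ C₂ : ℝ, 0 < C₁ ∧ 0 < C₂ ∧ ∃ N₀ : ℕ, ∀ N : ℕ, N₀ ≤ N →
      C₁ * N ≤
        (∑ p ∈ (Finset.Icc 1 N ×ˢ Finset.Icc 1 N).filter (fun p => p.1 * p.2 ≤ N),
          (1 / (p.2 : ℝ)) * (1 - ((2 : ℝ) ^ p.1)⁻¹) ^ p.2) ∧
      (∑ p ∈ (Finset.Icc 1 N ×ˢ Finset.Icc 1 N).filter (fun p => p.1 * p.2 ≤ N),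
          (1 / (p.2 : ℝ)) * (1 - ((2 : ℝ) ^ p.1)⁻¹) ^ p.2) ≤ C₂ * N := by
  refine ⟨1/2, 2, by norm_num, by norm_num, 1, fun N hN => ?_⟩
  set S := (Finset.Icc 1 N ×ˢ Finset.Icc 1 N).filter (fun p => p.1 * p.2 ≤ N) with hS
  -- basic facts about terms
  have hbase : ∀ a : ℕ, 1 ≤ a → (0:ℝ) ≤ 1 - ((2:ℝ)^a)⁻¹ := by
    intro a ha
    have h1 : (1:ℝ) ≤ 2^a := one_le_pow₀ (by norm_num)
    have : ((2:ℝ)^a)⁻¹ ≤ 1 := by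
      rw [inv_le_one_iff₀]; right; exact h1
    linarith
  have hle1 : ∀ a : ℕ, (1:ℝ) - ((2:ℝ)^a)⁻¹ ≤ 1 := by
    intro a
    have : (0:ℝ) < (2:ℝ)^a := by positivity
    have : (0:ℝ) ≤ ((2:ℝ)^a)⁻¹ := by positivity
    linarith
  have hmemS : ∀ p : ℕ × ℕ, p ∈ S → 1 ≤ p.1 ∧ 1 ≤ p.2 ∧ p.1 * p.2 ≤ N := by
    intro p hp
    simp only [hS, mem_filter, mem_product, mem_Icc] at hp
    exact ⟨hp.1.1.1, hp.1.2.1, hp.2⟩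
  have hnonneg : ∀ p ∈ S, (0:ℝ) ≤ (1 / (p.2 : ℝ)) * (1 - ((2 : ℝ) ^ p.1)⁻¹) ^ p.2 := by
    intro p hp
    obtain ⟨h1, h2, _⟩ := hmemS p hp
    have := hbase p.1 h1
    positivity
  constructor
  · -- lower bound
    have hsub : (Finset.Icc 1 N).map rowEmb ⊆ S := by
      intro p hp
      simp only [Finset.mem_map, mem_Icc] at hp
      obtain ⟨a, ha, rfl⟩ := hp
      simp only [hS, mem_filter, mem_product, mem_Icc, rowEmb_apply]
      omega
    have hstep : ∑ p ∈ (Finset.Icc 1 N).map rowEmb,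
        (1 / (p.2 : ℝ)) * (1 - ((2 : ℝ) ^ p.1)⁻¹) ^ p.2
        ≤ ∑ p ∈ S, (1 / (p.2 : ℝ)) * (1 - ((2 : ℝ) ^ p.1)⁻¹) ^ p.2 :=
      Finset.sum_le_sum_of_subset_of_nonneg hsub (fun p hp _ => hnonneg p hp)
    have himg : ∑ p ∈ (Finset.Icc 1 N).map rowEmb,
        (1 / (p.2 : ℝ)) * (1 - ((2 : ℝ) ^ p.1)⁻¹) ^ p.2
        = ∑ a ∈ Finset.Icc 1 N, (1 - ((2:ℝ)^a)⁻¹) := by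
      rw [Finset.sum_map]
      simp
    have hlow : (1/2 : ℝ) * N ≤ ∑ a ∈ Finset.Icc 1 N, (1 - ((2:ℝ)^a)⁻¹) := by
      have : ∀ a ∈ Finset.Icc 1 N, (1/2 : ℝ) ≤ 1 - ((2:ℝ)^a)⁻¹ := by
        intro a ha
        rw [mem_Icc] at ha
        have h2 : (2:ℝ) ≤ 2^a := by
          calc (2:ℝ) = 2^1 := by norm_num
          _ ≤ 2^a := by exact pow_le_pow_right₀ (by norm_num) ha.1
        have : ((2:ℝ)^a)⁻¹ ≤ (2:ℝ)⁻¹ := by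
          apply inv_anti₀ (by norm_num) h2
        norm_num at this ⊢
        linarith
      calc (1/2 : ℝ) * N = (Finset.Icc 1 N).card • (1/2 : ℝ) := by
            rw [Nat.card_Icc]; simp [nsmul_eq_mul, mul_comm]
        _ ≤ ∑ a ∈ Finset.Icc 1 N, (1 - ((2:ℝ)^a)⁻¹) :=
            Finset.card_nsmul_le_sum _ _ _ this
    linarith [hstep, himg ▸ hstep, hlow]
  · -- upper bound
    have hstep1 : ∑ p ∈ S, (1 / (p.2 : ℝ)) * (1 - ((2 : ℝ) ^ p.1)⁻¹) ^ p.2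
        ≤ ∑ p ∈ S, (1 / (p.2 : ℝ)) := by
      refine Finset.sum_le_sum ?_
      intro p hp
      obtain ⟨h1, h2, _⟩ := hmemS p hp
      have hb := hbase p.1 h1
      have hpow : (1 - ((2:ℝ)^p.1)⁻¹) ^ p.2 ≤ 1 := pow_le_one₀ hb (hle1 p.1)
      have : (0:ℝ) ≤ 1 / (p.2:ℝ) := by positivity
      nlinarith
    have hstep2 : ∑ p ∈ S, (1 / (p.2 : ℝ)) ≤ 2 * N := by
      rw [hS, Finset.sum_filter, Finset.sum_product_right]
      have hinner : ∀ c ∈ Finset.Icc 1 N,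
          (∑ a ∈ Finset.Icc 1 N, if a * c ≤ N then (1 / (c:ℝ)) else 0)
          ≤ (N:ℝ) * (1/(c:ℝ)^2) := by
        intro c hc
        rw [mem_Icc] at hc
        have hc1 : 1 ≤ c := hc.1
        rw [← Finset.sum_filter, Finset.sum_const]
        have hcard : ((Finset.Icc 1 N).filter (fun a => a * c ≤ N)).card ≤ N / c := by
          have : (Finset.Icc 1 N).filter (fun a => a * c ≤ N) ⊆ Finset.Icc 1 (N/c) := by
            intro a ha
            simp only [mem_filter, mem_Icc] at ha ⊢
            refine ⟨ha.1.1, ?_⟩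
            exact Nat.le_div_iff_mul_le (by omega) |>.mpr ha.2
          calc _ ≤ (Finset.Icc 1 (N/c)).card := Finset.card_le_card this
            _ = N / c := by simp [Nat.card_Icc]
        have hcast : ((N / c : ℕ) : ℝ) ≤ (N:ℝ) / (c:ℝ) := Nat.cast_div_le
        have hc0 : (0:ℝ) < c := by exact_mod_cast hc1
        calc ((Finset.Icc 1 N).filter (fun a => a * c ≤ N)).card • (1 / (c:ℝ))
            = (((Finset.Icc 1 N).filter (fun a => a * c ≤ N)).card : ℝ) * (1/(c:ℝ)) := by
              rw [nsmul_eq_mul]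
          _ ≤ ((N:ℝ)/(c:ℝ)) * (1/(c:ℝ)) := by
              apply mul_le_mul_of_nonneg_right _ (by positivity)
              calc (((Finset.Icc 1 N).filter (fun a => a * c ≤ N)).card : ℝ)
                  ≤ ((N / c : ℕ) : ℝ) := by exact_mod_cast hcard
                _ ≤ (N:ℝ)/(c:ℝ) := hcast
          _ = (N:ℝ) * (1/(c:ℝ)^2) := by ring
      calc ∑ c ∈ Finset.Icc 1 N, ∑ a ∈ Finset.Icc 1 N,
            (if (a, c).1 * (a, c).2 ≤ N then (1 / ((a,c).2:ℝ)) else 0)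
          ≤ ∑ c ∈ Finset.Icc 1 N, (N:ℝ) * (1/(c:ℝ)^2) := Finset.sum_le_sum hinner
        _ = (N:ℝ) * ∑ c ∈ Finset.Icc 1 N, (1/(c:ℝ)^2) := by rw [Finset.mul_sum]
        _ ≤ (N:ℝ) * 2 := by
            apply mul_le_mul_of_nonneg_left (sum_inv_sq_le N) (by positivity)
        _ = 2 * N := by ring
    linarith
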